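/- arXiv:2507.15631 — 3 statements merged into one kernel-verified Lean document; each statement's English description precedes it below -/
import Mathlib

section
/- Let Q ~ Uniform(-1,1), let Q̃ = sign(Q) - Q be its knockoff, let M = min(Q, Q̃), and let B = 1{|Q| > 1/2}. Then B takes the values 0 and 1 each with probability 1/2, and B is independent of M. Equivalently, conditionally on the unordered pair {Q, Q̃}, each element of the pair is equally likely to be the true signed p-value Q. -/
open MeasureTheory ProbabilityTheory
open scoped ENNReal

private lemma measurable_realSign : Measurable Real.sign := by
  have h : Real.sign = fun r : ℝ => if r < 0 then (-1:ℝ) else if 0 < r then 1 else 0 := by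
    funext r; rw [Real.sign]
  rw [h]
  exact Measurable.ite measurableSet_Iio measurable_const
    (Measurable.ite measurableSet_Ioi measurable_const measurable_const)

private lemma halveE {x y : ℝ≥0∞} (h : x + x = y) : x = 2⁻¹ * y := by
  rw [← h, ← two_mul, ← mul_assoc, ENNReal.inv_mul_cancel two_ne_zero ENNReal.ofNat_ne_top, one_mul]

private lemma map_affine_Ioo (c : ℝ) (a b : ℝ)
    (hpre : (fun q:ℝ => c - q) ⁻¹' (Set.Ioo a b) = Set.Ioo a b) :
    Measure.map (fun q : ℝ => c - q) (volume.restrict (Set.Ioo a b))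
      = volume.restrict (Set.Ioo a b) := by
  have hf : Measurable (fun q : ℝ => c - q) := measurable_const.sub measurable_id
  conv_lhs => rw [← hpre]
  rw [← Measure.restrict_map hf measurableSet_Ioo, Measure.map_sub_left_eq_self volume c]

/-- The knockoff map `q ↦ sign q - q` preserves the uniform measure on `(-1,1)`. -/
private lemma mapPhi :
    Measure.map (fun q : ℝ => Real.sign q - q)
        ((2 : ℝ≥0∞)⁻¹ • volume.restrict (Set.Ioo (-1 : ℝ) 1))
      = (2 : ℝ≥0∞)⁻¹ • volume.restrict (Set.Ioo (-1 : ℝ) 1) := by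
  have hφ : Measurable (fun q : ℝ => Real.sign q - q) :=
    measurable_realSign.sub measurable_id
  have hsplit : volume.restrict (Set.Ioo (-1:ℝ) 1)
      = volume.restrict (Set.Ioo (-1:ℝ) 0) + volume.restrict (Set.Ioo (0:ℝ) 1) := by
    have hd : Disjoint (Set.Ioo (-1:ℝ) 0) (Set.Ico (0:ℝ) 1) := by
      rw [Set.disjoint_left]; rintro q ⟨_, h2⟩ ⟨h3, _⟩; linarith
    rw [← Set.Ioo_union_Ico_eq_Ioo (by norm_num : (-1:ℝ) < 0) (by norm_num : (0:ℝ) ≤ 1),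
        Measure.restrict_union hd measurableSet_Ico,
        Measure.restrict_congr_set Ioo_ae_eq_Ico.symm]
  have h1 : Measure.map (fun q : ℝ => Real.sign q - q) (volume.restrict (Set.Ioo (0:ℝ) 1))
      = volume.restrict (Set.Ioo (0:ℝ) 1) := by
    have hae : (fun q : ℝ => Real.sign q - q)
        =ᵐ[volume.restrict (Set.Ioo (0:ℝ) 1)] (fun q => 1 - q) := by
      rw [Filter.EventuallyEq, ae_restrict_iff' measurableSet_Ioo]
      filter_upwards with q hq
      rw [Real.sign_of_pos hq.1]
    rw [Measure.map_congr hae]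
    apply map_affine_Ioo
    ext q; simp only [Set.mem_preimage, Set.mem_Ioo]
    constructor <;> rintro ⟨ha, hb⟩ <;> constructor <;> linarith
  have h2 : Measure.map (fun q : ℝ => Real.sign q - q) (volume.restrict (Set.Ioo (-1:ℝ) 0))
      = volume.restrict (Set.Ioo (-1:ℝ) 0) := by
    have hae : (fun q : ℝ => Real.sign q - q)
        =ᵐ[volume.restrict (Set.Ioo (-1:ℝ) 0)] (fun q => -1 - q) := by
      rw [Filter.EventuallyEq, ae_restrict_iff' measurableSet_Ioo]
      filter_upwards with q hq
      rw [Real.sign_of_neg hq.2]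
    rw [Measure.map_congr hae]
    apply map_affine_Ioo
    ext q; simp only [Set.mem_preimage, Set.mem_Ioo]
    constructor <;> rintro ⟨ha, hb⟩ <;> constructor <;> linarith
  rw [Measure.map_smul, hsplit, Measure.map_add _ _ hφ, h1, h2]

/-- The pointwise swap property of the knockoff map. -/
private lemma swap_pointwise {q : ℝ} (hq1 : -1 < q) (hq2 : q < 1) (hm : q ≠ -(1/2))
    (h0 : q ≠ 0) (hp : q ≠ 1/2) :
    min (Real.sign q - q) (Real.sign (Real.sign q - q) - (Real.sign q - q))
        = min q (Real.sign q - q)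
      ∧ ((1:ℝ)/2 < |Real.sign q - q| ↔ ¬ (1:ℝ)/2 < |q|) := by
  rcases lt_trichotomy q 0 with hlt | heq | hgt
  · have hs : Real.sign q = -1 := Real.sign_of_neg hlt
    rw [hs]
    have hs2 : Real.sign (-1 - q) = -1 := Real.sign_of_neg (by linarith)
    rw [hs2]
    constructor
    · rw [show (-1 : ℝ) - (-1 - q) = q by ring]
      exact min_comm _ _
    · rw [abs_of_neg (show (-1:ℝ) - q < 0 by linarith), abs_of_neg hlt]
      constructor
      · intro h hh; linarith
      · intro h
        have h' : -(1/2 : ℝ) ≤ q := by push_neg at h; linarith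
        have h'' : -(1/2 : ℝ) < q := lt_of_le_of_ne h' (Ne.symm hm)
        linarith
  · exact absurd heq h0
  · have hs : Real.sign q = 1 := Real.sign_of_pos hgt
    rw [hs]
    have hs2 : Real.sign (1 - q) = 1 := Real.sign_of_pos (by linarith)
    rw [hs2]
    constructor
    · rw [show (1 : ℝ) - (1 - q) = q by ring]
      exact min_comm _ _
    · rw [abs_of_pos (show (0:ℝ) < 1 - q by linarith), abs_of_pos hgt]
      constructor
      · intro h hh; linarith
      · intro h
        have h' : q ≤ (1/2 : ℝ) := by push_neg at h; linarith
        have h'' : q < (1/2 : ℝ) := lt_of_le_of_ne h' hp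
        linarith

private lemma unif_null (S : Set ℝ) (hS : volume S = 0) :
    ((2 : ℝ≥0∞)⁻¹ • volume.restrict (Set.Ioo (-1 : ℝ) 1)) S = 0 := by
  rw [Measure.smul_apply, smul_eq_mul, Measure.restrict_apply' measurableSet_Ioo,
      measure_mono_null Set.inter_subset_left hS, mul_zero]

private lemma unif_swap (t : Set ℝ) (ht : MeasurableSet t) :
    ((2 : ℝ≥0∞)⁻¹ • volume.restrict (Set.Ioo (-1 : ℝ) 1))
        ({q : ℝ | (1:ℝ)/2 < |q|}ᶜ ∩ (fun q => min q (Real.sign q - q)) ⁻¹' t)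
      = ((2 : ℝ≥0∞)⁻¹ • volume.restrict (Set.Ioo (-1 : ℝ) 1))
        ({q : ℝ | (1:ℝ)/2 < |q|} ∩ (fun q => min q (Real.sign q - q)) ⁻¹' t) := by
  have hφ : Measurable (fun q : ℝ => Real.sign q - q) :=
    measurable_realSign.sub measurable_id
  have hA : MeasurableSet {q : ℝ | (1:ℝ)/2 < |q|} :=
    measurableSet_lt measurable_const measurable_id.abs
  have hg : Measurable (fun q : ℝ => min q (Real.sign q - q)) := measurable_id.min hφ
  set ν := (2 : ℝ≥0∞)⁻¹ • volume.restrict (Set.Ioo (-1 : ℝ) 1) with hν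
  have hmap : ν ((fun q : ℝ => Real.sign q - q) ⁻¹'
      ({q : ℝ | (1:ℝ)/2 < |q|} ∩ (fun q => min q (Real.sign q - q)) ⁻¹' t))
      = ν ({q : ℝ | (1:ℝ)/2 < |q|} ∩ (fun q => min q (Real.sign q - q)) ⁻¹' t) := by
    conv_rhs => rw [hν, ← mapPhi]
    rw [Measure.map_apply hφ (hA.inter (hg ht))]
  have hAE : ∀ᵐ q ∂ν, q ∈ Set.Ioo (-1:ℝ) 1 ∧ q ≠ -(1/2) ∧ q ≠ 0 ∧ q ≠ 1/2 := by
    have hcompl : ν (Set.Ioo (-1:ℝ) 1)ᶜ = 0 := by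
      rw [hν, Measure.smul_apply, smul_eq_mul,
          Measure.restrict_apply' measurableSet_Ioo, Set.compl_inter_self,
          measure_empty, mul_zero]
    have hb : ν ((Set.Ioo (-1:ℝ) 1)ᶜ ∪ {-(1/2), 0, (1/2:ℝ)}) = 0 := by
      apply measure_union_null hcompl
      rw [hν]
      exact unif_null _ ((Set.toFinite _).measure_zero volume)
    have := (measure_eq_zero_iff_ae_notMem (μ := ν)).1 hb
    filter_upwards [this] with q hq
    simp only [Set.mem_union, Set.mem_compl_iff, Set.mem_insert_iff,
      Set.mem_singleton_iff, not_or, not_not] at hq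
    exact ⟨hq.1, hq.2.1, hq.2.2.1, hq.2.2.2⟩
  have hset : ({q : ℝ | (1:ℝ)/2 < |q|}ᶜ ∩ (fun q => min q (Real.sign q - q)) ⁻¹' t : Set ℝ)
      =ᵐ[ν] ((fun q : ℝ => Real.sign q - q) ⁻¹'
        ({q : ℝ | (1:ℝ)/2 < |q|} ∩ (fun q => min q (Real.sign q - q)) ⁻¹' t)) := by
    rw [Filter.eventuallyEq_set]
    filter_upwards [hAE] with q hq
    obtain ⟨⟨hq1, hq2⟩, hm, h0, hp⟩ := hq
    obtain ⟨kg, kA⟩ := swap_pointwise hq1 hq2 hm h0 hp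
    simp only [Set.mem_inter_iff, Set.mem_compl_iff, Set.mem_preimage,
      Set.mem_setOf_eq, kg, kA]
  exact (measure_congr hset).trans hmap

/-- For `Q ~ Uniform(-1,1)` with knockoff `Q̃ = sign(Q) - Q`, the indicator
`B = 1{|Q| > 1/2}` (which tells which element of the pair is `Q`) takes values `1` and `0`
each with probability `1/2` and is independent of `M = min(Q, Q̃)` (the masked pair). -/
theorem stmt_7 {Ω : Type*} [MeasurableSpace Ω] (μ : Measure Ω) [IsProbabilityMeasure μ]
    (Q : Ω → ℝ) (hQ : Measurable Q)
    (hQUnif : Measure.map Q μ = (2 : ℝ≥0∞)⁻¹ • volume.restrict (Set.Ioo (-1 : ℝ) 1)) :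
    μ {ω | (if (1 : ℝ) / 2 < |Q ω| then (1 : ℝ) else 0) = 1} = 2⁻¹ ∧
    μ {ω | (if (1 : ℝ) / 2 < |Q ω| then (1 : ℝ) else 0) = 0} = 2⁻¹ ∧
    IndepFun (fun ω => if (1 : ℝ) / 2 < |Q ω| then (1 : ℝ) else 0)
      (fun ω => min (Q ω) (Real.sign (Q ω) - Q ω)) μ := by
  have hφ : Measurable (fun q : ℝ => Real.sign q - q) :=
    measurable_realSign.sub measurable_id
  have hA : MeasurableSet {q : ℝ | (1:ℝ)/2 < |q|} :=
    measurableSet_lt measurable_const measurable_id.abs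
  have hg : Measurable (fun q : ℝ => min q (Real.sign q - q)) := measurable_id.min hφ
  haveI : IsProbabilityMeasure (Measure.map Q μ) := Measure.isProbabilityMeasure_map hQ.aemeasurable
  have hmapA : ∀ S : Set ℝ, MeasurableSet S → μ (Q ⁻¹' S) = Measure.map Q μ S := by
    intro S hS; rw [Measure.map_apply hQ hS]
  have hswap : ∀ t : Set ℝ, MeasurableSet t →
      Measure.map Q μ ({q : ℝ | (1:ℝ)/2 < |q|}ᶜ ∩ (fun q => min q (Real.sign q - q)) ⁻¹' t)
      = Measure.map Q μ ({q : ℝ | (1:ℝ)/2 < |q|} ∩ (fun q => min q (Real.sign q - q)) ⁻¹' t) := by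
    intro t ht; rw [hQUnif]; exact unif_swap t ht
  have hhalf : ∀ t : Set ℝ, MeasurableSet t →
      Measure.map Q μ ({q : ℝ | (1:ℝ)/2 < |q|} ∩ (fun q => min q (Real.sign q - q)) ⁻¹' t)
      = 2⁻¹ * Measure.map Q μ ((fun q => min q (Real.sign q - q)) ⁻¹' t) := by
    intro t ht
    have hd := measure_inter_add_diff (μ := Measure.map Q μ)
      ((fun q : ℝ => min q (Real.sign q - q)) ⁻¹' t) hA
    rw [Set.diff_eq_compl_inter, hswap t ht,
        Set.inter_comm ((fun q : ℝ => min q (Real.sign q - q)) ⁻¹' t)] at hd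
    exact halveE hd
  have hνA : Measure.map Q μ {q : ℝ | (1:ℝ)/2 < |q|} = 2⁻¹ := by
    have := hhalf Set.univ MeasurableSet.univ
    rw [Set.preimage_univ, Set.inter_univ, measure_univ, mul_one] at this
    exact this
  have hνAc : Measure.map Q μ {q : ℝ | (1:ℝ)/2 < |q|}ᶜ = 2⁻¹ := by
    have := hswap Set.univ MeasurableSet.univ
    rw [Set.preimage_univ, Set.inter_univ, Set.inter_univ, hνA] at this
    exact this
  have hset1 : {ω | (if (1 : ℝ) / 2 < |Q ω| then (1 : ℝ) else 0) = 1}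
      = Q ⁻¹' {q : ℝ | (1:ℝ)/2 < |q|} := by
    ext ω; by_cases h : (1:ℝ)/2 < |Q ω| <;> simp [h]
  have hset0 : {ω | (if (1 : ℝ) / 2 < |Q ω| then (1 : ℝ) else 0) = 0}
      = Q ⁻¹' {q : ℝ | (1:ℝ)/2 < |q|}ᶜ := by
    ext ω; by_cases h : (1:ℝ)/2 < |Q ω| <;> simp [h]
  refine ⟨?_, ?_, ?_⟩
  · rw [hset1, hmapA _ hA, hνA]
  · rw [hset0, hmapA _ hA.compl, hνAc]
  · rw [indepFun_iff_measure_inter_preimage_eq_mul]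
    intro s t hs ht
    have hcomp1 : (fun ω => if (1 : ℝ) / 2 < |Q ω| then (1 : ℝ) else 0) ⁻¹' s
        = Q ⁻¹' ((fun q : ℝ => if (1:ℝ)/2 < |q| then (1:ℝ) else 0) ⁻¹' s) := rfl
    have hcomp2 : (fun ω => min (Q ω) (Real.sign (Q ω) - Q ω)) ⁻¹' t
        = Q ⁻¹' ((fun q : ℝ => min q (Real.sign q - q)) ⁻¹' t) := rfl
    have hgt : Measure.map Q μ ((fun q : ℝ => min q (Real.sign q - q)) ⁻¹' t)
        = μ (Q ⁻¹' ((fun q : ℝ => min q (Real.sign q - q)) ⁻¹' t)) := (hmapA _ (hg ht)).symm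
    by_cases h1 : (1:ℝ) ∈ s <;> by_cases h0 : (0:ℝ) ∈ s
    · have hFs : (fun q : ℝ => if (1:ℝ)/2 < |q| then (1:ℝ) else 0) ⁻¹' s = Set.univ := by
        ext q
        rw [Set.mem_preimage]
        by_cases h : (1:ℝ)/2 < |q|
        · rw [if_pos h]; simp [h1]
        · rw [if_neg h]; simp [h0]
      rw [hcomp1, hcomp2, hFs]
      simp only [Set.preimage_univ, Set.univ_inter, measure_univ, one_mul]
    · have hFs : (fun q : ℝ => if (1:ℝ)/2 < |q| then (1:ℝ) else 0) ⁻¹' s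
          = {q : ℝ | (1:ℝ)/2 < |q|} := by
        ext q
        rw [Set.mem_preimage, Set.mem_setOf_eq]
        by_cases h : (1:ℝ)/2 < |q|
        · rw [if_pos h]; exact iff_of_true h1 h
        · rw [if_neg h]; exact iff_of_false h0 h
      rw [hcomp1, hcomp2, hFs, ← Set.preimage_inter, hmapA _ (hA.inter (hg ht)),
          hmapA _ hA, hhalf t ht, hνA, hgt]
    · have hFs : (fun q : ℝ => if (1:ℝ)/2 < |q| then (1:ℝ) else 0) ⁻¹' s
          = {q : ℝ | (1:ℝ)/2 < |q|}ᶜ := by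
        ext q
        rw [Set.mem_preimage, Set.mem_compl_iff, Set.mem_setOf_eq]
        by_cases h : (1:ℝ)/2 < |q|
        · rw [if_pos h]; exact iff_of_false h1 (not_not_intro h)
        · rw [if_neg h]; exact iff_of_true h0 h
      rw [hcomp1, hcomp2, hFs, ← Set.preimage_inter, hmapA _ (hA.compl.inter (hg ht)),
          hmapA _ hA.compl, hswap t ht, hhalf t ht, hνAc, hgt]
    · have hFs : (fun q : ℝ => if (1:ℝ)/2 < |q| then (1:ℝ) else 0) ⁻¹' s = ∅ := by
        ext q
        rw [Set.mem_preimage]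
        by_cases h : (1:ℝ)/2 < |q|
        · rw [if_pos h]; simp [h1]
        · rw [if_neg h]; simp [h0]
      rw [hcomp1, hcomp2, hFs]
      simp
end

section
/- Let B_1, ..., B_n be i.i.d. {0,1}-valued random variables with P(B_i = 1) = 1/2. For 0 ≤ j ≤ n let S_+(j) = #{i ≤ j : B_i = 1} and S_-(j) = #{i ≤ j : B_i = 0}, and let G_j = σ(S_+(j), B_{j+1}, ..., B_n), so that G_n ⊆ G_{n-1} ⊆ ... ⊆ G_0. Then the process M_j = S_+(j) / (1 + S_-(j)) is a supermartingale running backward in j: for every 1 ≤ j ≤ n, E[ M_{j-1} | G_j ] ≤ M_j. -/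
open MeasureTheory ProbabilityTheory

/-- The number of successes among the first `j` coin flips. -/
def Splus {Ω : Type*} {n : ℕ} (B : Fin n → Ω → ℕ) (j : ℕ) (ω : Ω) : ℕ :=
  (Finset.univ.filter (fun i : Fin n => (i : ℕ) < j ∧ B i ω = 1)).card

/-- The number of failures among the first `j` coin flips. -/
def Sminus {Ω : Type*} {n : ℕ} (B : Fin n → Ω → ℕ) (j : ℕ) (ω : Ω) : ℕ :=
  (Finset.univ.filter (fun i : Fin n => (i : ℕ) < j ∧ B i ω = 0)).card

/-- The knockoff ratio process `M_j = S₊(j) / (1 + S₋(j))`. -/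
noncomputable def Mrat {Ω : Type*} {n : ℕ} (B : Fin n → Ω → ℕ) (j : ℕ) (ω : Ω) : ℝ :=
  (Splus B j ω : ℝ) / (1 + (Sminus B j ω : ℝ))

/-- The backward filtration `G_j = σ(S₊(j), B_{j+1}, ..., B_n)`. -/
def Gfilt {Ω : Type*} [MeasurableSpace Ω] {n : ℕ} (B : Fin n → Ω → ℕ) (j : ℕ) :
    MeasurableSpace Ω :=
  MeasurableSpace.comap (fun ω => Splus B j ω) ⊤
    ⊔ ⨆ i : Fin n, ⨆ _ : j ≤ (i : ℕ), MeasurableSpace.comap (B i) ⊤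

/-!
Encode the coins as a pattern `c : Fin n → Fin 2`, which is uniformly distributed. Every
`G_{p+1}`-measurable event is the preimage of a set of patterns that is invariant under
permutations of the first `p + 1` coordinates, so, given `S₊(p+1) = s`, the coin `p` is a
Bernoulli(`s / (p + 1)`) variable. Since `M_p = s' / (1 + p - s')` with `s' = s - c p`, this
gives `E[M_p | G_{p+1}] = condRatio p s`, which equals `M_{p+1} = s / (2 + p - s)` except when
`s = p + 1`, where it is `p < p + 1`.
-/

open Finset

namespace Knockoff

variable {n : ℕ}

def countOnes (j : ℕ) (c : Fin n → Fin 2) : ℕ :=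
  (Finset.univ.filter fun i : Fin n => (i : ℕ) < j ∧ c i = 1).card

def IsSwapInvariantBelow (j : ℕ) (W : Finset (Fin n → Fin 2)) : Prop :=
  ∀ i k : Fin n, (i : ℕ) < j → (k : ℕ) < j → ∀ c ∈ W, c ∘ Equiv.swap i k ∈ W

lemma countOnes_eq_sum (j : ℕ) (c : Fin n → Fin 2) :
    countOnes j c = ∑ i ∈ univ.filter (fun i : Fin n => (i : ℕ) < j), (c i : ℕ) := by
  rw [countOnes, ← Finset.filter_filter, Finset.card_filter]
  refine Finset.sum_congr rfl fun i _ => ?_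
  obtain h | h : c i = 0 ∨ c i = 1 := by omega
  all_goals simp [h]

lemma countOnes_succ (p : Fin n) (c : Fin n → Fin 2) :
    countOnes (p + 1) c = countOnes p c + c p := by
  have : univ.filter (fun i : Fin n => (i : ℕ) < p + 1)
      = insert p (univ.filter fun i : Fin n => (i : ℕ) < p) := by
    ext i; simp [le_iff_eq_or_lt, Fin.val_inj]
  rw [countOnes_eq_sum, countOnes_eq_sum, this, Finset.sum_insert (by simp), add_comm]

lemma countOnes_comp_swap {j : ℕ} (c : Fin n → Fin 2) {i k : Fin n} (hi : (i : ℕ) < j)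
    (hk : (k : ℕ) < j) : countOnes j (c ∘ Equiv.swap i k) = countOnes j c := by
  rw [countOnes_eq_sum, countOnes_eq_sum]
  refine Finset.sum_equiv (Equiv.swap i k) (fun x => ?_) fun x _ => rfl
  simp only [Finset.mem_filter, Finset.mem_univ, true_and]
  rcases eq_or_ne x i with rfl | hxi
  · simp [hi, hk]
  rcases eq_or_ne x k with rfl | hxk
  · simp [hi, hk]
  · rw [Equiv.swap_apply_of_ne_of_ne hxi hxk]

-- Swapping coordinates `i` and `p` shows that the left side does not depend on `p < j`;
-- averaging it over `p < j` turns `c p` into `countOnes j c / j`.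
lemma sum_coord_mul_eq {j : ℕ} (hjn : j ≤ n) {W : Finset (Fin n → Fin 2)}
    (hW : IsSwapInvariantBelow j W) {p : Fin n} (hp : (p : ℕ) < j) (g : ℕ → ℝ) :
    ∑ c ∈ W, ((c p : ℕ) : ℝ) * g (countOnes j c)
      = ∑ c ∈ W, (countOnes j c : ℝ) / j * g (countOnes j c) := by
  have hswap : ∀ i : Fin n, (i : ℕ) < j →
      ∑ c ∈ W, ((c i : ℕ) : ℝ) * g (countOnes j c)
        = ∑ c ∈ W, ((c p : ℕ) : ℝ) * g (countOnes j c) := fun i hi =>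
    Finset.sum_nbij' (· ∘ Equiv.swap i p) (· ∘ Equiv.swap i p)
      (fun c hc => hW i p hi hp c hc) (fun c hc => hW i p hi hp c hc)
      (fun c _ => by ext x; simp) (fun c _ => by ext x; simp)
      (fun c _ => by simp [countOnes_comp_swap c hi hp])
  have hcard : (#{i : Fin n | (i : ℕ) < j} : ℝ) = j := by
    rw [Fin.card_filter_val_lt, min_eq_right hjn]
  have hj : (j : ℝ) ≠ 0 := by exact_mod_cast (Nat.zero_lt_of_lt hp).ne'
  calc ∑ c ∈ W, ((c p : ℕ) : ℝ) * g (countOnes j c)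
      = (∑ i ∈ univ.filter (fun i : Fin n => (i : ℕ) < j),
          ∑ c ∈ W, ((c i : ℕ) : ℝ) * g (countOnes j c)) / j := by
        rw [Finset.sum_congr rfl fun i hi => hswap i (Finset.mem_filter.mp hi).2,
          Finset.sum_const, nsmul_eq_mul, hcard, mul_div_cancel_left₀ _ hj]
    _ = ∑ c ∈ W, (countOnes j c : ℝ) / j * g (countOnes j c) := by
        rw [Finset.sum_comm, Finset.sum_div]
        refine Finset.sum_congr rfl fun c _ => ?_
        rw [countOnes_eq_sum, Nat.cast_sum, ← Finset.sum_mul, div_mul_eq_mul_div]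

lemma sum_comp_coord_eq {j : ℕ} (hjn : j ≤ n) {W : Finset (Fin n → Fin 2)}
    (hW : IsSwapInvariantBelow j W) {p : Fin n} (hp : (p : ℕ) < j) (F : ℕ → Fin 2 → ℝ) :
    ∑ c ∈ W, F (countOnes j c) (c p)
      = ∑ c ∈ W, ((countOnes j c : ℝ) / j * F (countOnes j c) 1
          + (1 - (countOnes j c : ℝ) / j) * F (countOnes j c) 0) := by
  have hF : ∀ s (b : Fin 2), F s b = (b : ℕ) * F s 1 + (F s 0 - (b : ℕ) * F s 0) := by
    intro s b
    fin_cases b <;> simp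
  rw [Finset.sum_congr rfl fun c _ => hF _ (c p), Finset.sum_add_distrib,
    Finset.sum_sub_distrib, sum_coord_mul_eq hjn hW hp (F · 1), sum_coord_mul_eq hjn hW hp (F · 0),
    ← Finset.sum_sub_distrib, ← Finset.sum_add_distrib]
  refine Finset.sum_congr rfl fun c _ => ?_
  ring

noncomputable def ratio (k s : ℕ) : ℝ := s / (1 + k - s)

-- At `s = 0` the truncated `s - 1` is harmless: its weight `s / (k + 1)` vanishes.
noncomputable def condRatio (k s : ℕ) : ℝ :=
  s / (k + 1) * ratio k (s - 1) + (1 - s / (k + 1)) * ratio k s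

lemma sum_ratio_eq_sum_condRatio {p : Fin n} {W : Finset (Fin n → Fin 2)}
    (hW : IsSwapInvariantBelow (p + 1) W) :
    ∑ c ∈ W, ratio p (countOnes p c) = ∑ c ∈ W, condRatio p (countOnes (p + 1) c) := by
  have hsplit : ∀ c : Fin n → Fin 2,
      ratio p (countOnes p c) = ratio p (countOnes (p + 1) c - c p) := fun c => by
    rw [countOnes_succ, Nat.add_sub_cancel]
  simp only [hsplit]
  rw [sum_comp_coord_eq p.isLt hW (Nat.lt_succ_self p) fun s b => ratio p (s - b)]
  simp [condRatio]

lemma condRatio_le_ratio {k s : ℕ} (hs : s ≤ k + 1) : condRatio k s ≤ ratio (k + 1) s := by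
  rcases hs.lt_or_eq with hs | rfl
  · apply le_of_eq
    rcases Nat.eq_zero_or_pos s with rfl | hs0
    · simp [condRatio, ratio]
    have hsk : (s : ℝ) < k + 1 := by exact_mod_cast hs
    have h1 : (1 + k - s : ℝ) ≠ 0 := by linarith
    have h2 : (1 + k - (s - 1) : ℝ) ≠ 0 := by linarith
    have h3 : (1 + (k + 1) - s : ℝ) ≠ 0 := by linarith
    unfold condRatio ratio
    push_cast [Nat.one_le_iff_ne_zero.mpr hs0.ne']
    field_simp
    ring
  · have hk : (k + 1 : ℝ) ≠ 0 := by positivity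
    simp [condRatio, ratio, div_self hk]

section Coins

variable {Ω : Type*} {B : Fin n → Ω → ℕ}

def pattern (B : Fin n → Ω → ℕ) (ω : Ω) : Fin n → Fin 2 :=
  fun i => if B i ω = 1 then 1 else 0

lemma pattern_apply_eq_one {ω : Ω} {i : Fin n} : pattern B ω i = 1 ↔ B i ω = 1 := by
  unfold pattern
  split_ifs with h <;> simp [h]

lemma Splus_eq_countOnes (k : ℕ) (ω : Ω) : Splus B k ω = countOnes k (pattern B ω) := by
  simp only [Splus, countOnes, pattern_apply_eq_one]

lemma Splus_add_Sminus (hBval : ∀ i ω, B i ω = 0 ∨ B i ω = 1) {k : ℕ} (hk : k ≤ n) (ω : Ω) :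
    Splus B k ω + Sminus B k ω = k := by
  have hcompl : univ.filter (fun i : Fin n => (i : ℕ) < k ∧ B i ω = 0)
      = (univ.filter fun i : Fin n => (i : ℕ) < k).filter (fun i => ¬ B i ω = 1) := by
    ext i
    rcases hBval i ω with h | h <;> simp [h]
  rw [Splus, Sminus, hcompl, ← Finset.filter_filter, Finset.card_filter_add_card_filter_not,
    Fin.card_filter_val_lt, min_eq_right hk]

lemma Mrat_eq_ratio (hBval : ∀ i ω, B i ω = 0 ∨ B i ω = 1) {k : ℕ} (hk : k ≤ n) (ω : Ω) :
    Mrat B k ω = ratio k (Splus B k ω) := by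
  have h : (Sminus B k ω : ℝ) = k - Splus B k ω := by
    rw [eq_sub_iff_add_eq', ← Nat.cast_add, Splus_add_Sminus hBval hk ω]
  rw [Mrat, ratio, h, add_sub_assoc]

def countAndTail (j : ℕ) (c : Fin n → Fin 2) : ℕ × (Fin n → Fin 2) :=
  (countOnes j c, fun i => if j ≤ (i : ℕ) then c i else 0)

lemma countAndTail_comp_swap {j : ℕ} (c : Fin n → Fin 2) {i k : Fin n} (hi : (i : ℕ) < j)
    (hk : (k : ℕ) < j) : countAndTail j (c ∘ Equiv.swap i k) = countAndTail j c := by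
  refine Prod.ext (countOnes_comp_swap c hi hk) (funext fun x => ?_)
  by_cases hx : j ≤ (x : ℕ)
  · have hxi : x ≠ i := by rintro rfl; omega
    have hxk : x ≠ k := by rintro rfl; omega
    simp [countAndTail, hx, Equiv.swap_apply_of_ne_of_ne hxi hxk]
  · simp [countAndTail, hx]

section Measurable

variable [MeasurableSpace Ω]

lemma measurable_pattern (hB : ∀ i, Measurable (B i)) : Measurable (pattern B) :=
  measurable_pi_lambda _ fun i =>
    (Measurable.of_discrete (f := fun m : ℕ => if m = 1 then (1 : Fin 2) else 0)).comp (hB i)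

lemma measure_pattern_preimage_singleton (μ : Measure Ω) [IsProbabilityMeasure μ]
    (hB : ∀ i, Measurable (B i)) (hfair : ∀ i, μ {ω | B i ω = 1} = 2⁻¹) (hindep : iIndepFun B μ)
    (c : Fin n → Fin 2) : μ (pattern B ⁻¹' {c}) = 2⁻¹ ^ n := by
  have hind : iIndepFun (fun i ω => pattern B ω i) μ :=
    hindep.comp (fun _ m => if m = 1 then (1 : Fin 2) else 0) fun _ => Measurable.of_discrete
  have hcoord : ∀ i b, μ ((fun ω => pattern B ω i) ⁻¹' {b}) = 2⁻¹ := by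
    intro i b
    have hone : (fun ω => pattern B ω i) ⁻¹' {1} = {ω | B i ω = 1} := by
      ext ω; exact pattern_apply_eq_one
    obtain rfl | rfl : b = 0 ∨ b = 1 := by omega
    · have hzero : (fun ω => pattern B ω i) ⁻¹' {0} = {ω | B i ω = 1}ᶜ := by
        rw [← hone]
        ext ω
        simp only [Set.mem_preimage, Set.mem_singleton_iff, Set.mem_compl_iff]
        omega
      rw [hzero, measure_compl (measurableSet_eq_fun (hB i) measurable_const) (measure_ne_top μ _),
        measure_univ, hfair, ENNReal.one_sub_inv_two]
    · exact hone ▸ hfair i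
  have hpre : pattern B ⁻¹' {c} = ⋂ i ∈ (univ : Finset (Fin n)),
      (fun ω => pattern B ω i) ⁻¹' {c i} := by
    ext ω; simp [funext_iff]
  rw [hpre, hind.measure_inter_preimage_eq_mul _ fun _ _ => measurableSet_singleton _]
  simp [hcoord]

lemma setIntegral_comp_pattern (μ : Measure Ω) [IsProbabilityMeasure μ]
    (hB : ∀ i, Measurable (B i)) (hfair : ∀ i, μ {ω | B i ω = 1} = 2⁻¹) (hindep : iIndepFun B μ)
    (W : Finset (Fin n → Fin 2)) (g : (Fin n → Fin 2) → ℝ) :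
    ∫ ω in pattern B ⁻¹' W, g (pattern B ω) ∂μ = 2⁻¹ ^ n * ∑ c ∈ W, g c := by
  rw [← setIntegral_map MeasurableSet.of_discrete Measurable.of_discrete.aestronglyMeasurable
    (measurable_pattern hB).aemeasurable, setIntegral_finset W Integrable.of_finite.integrableOn,
    Finset.mul_sum]
  refine Finset.sum_congr rfl fun c _ => ?_
  rw [measureReal_def, Measure.map_apply (measurable_pattern hB) (measurableSet_singleton c),
    measure_pattern_preimage_singleton μ hB hfair hindep, smul_eq_mul]
  simp

lemma integrable_comp_pattern (μ : Measure Ω) [IsFiniteMeasure μ]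
    (hB : ∀ i, Measurable (B i)) (g : (Fin n → Fin 2) → ℝ) :
    Integrable (fun ω => g (pattern B ω)) μ :=
  (integrable_map_measure Measurable.of_discrete.aestronglyMeasurable
    (measurable_pattern hB).aemeasurable).mp Integrable.of_finite

lemma Gfilt_le_comap_countAndTail (hBval : ∀ i ω, B i ω = 0 ∨ B i ω = 1)
    (j : ℕ) : Gfilt B j ≤ MeasurableSpace.comap (countAndTail j ∘ pattern B) ⊤ := by
  refine sup_le ?_ (iSup₂_le fun i hij => ?_)
  · have h : (fun ω => Splus B j ω) = Prod.fst ∘ countAndTail j ∘ pattern B :=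
      funext (Splus_eq_countOnes j)
    rw [h, ← MeasurableSpace.comap_comp]
    exact MeasurableSpace.comap_mono le_top
  · have h : B i = (fun q : ℕ × (Fin n → Fin 2) => (q.2 i : ℕ)) ∘ countAndTail j ∘ pattern B := by
      funext ω
      rcases hBval i ω with h | h <;> simp [countAndTail, pattern, hij, h]
    rw [h, ← MeasurableSpace.comap_comp]
    exact MeasurableSpace.comap_mono le_top

lemma exists_swapInvariant_of_measurableSet_Gfilt
    (hBval : ∀ i ω, B i ω = 0 ∨ B i ω = 1) {j : ℕ} {t : Set Ω} (ht : MeasurableSet[Gfilt B j] t) :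
    ∃ W : Finset (Fin n → Fin 2), IsSwapInvariantBelow j W ∧ t = pattern B ⁻¹' W := by
  classical
  obtain ⟨S, -, rfl⟩ := Gfilt_le_comap_countAndTail hBval j t ht
  refine ⟨univ.filter fun c => countAndTail j c ∈ S, fun i k hi hk c hc => ?_, ?_⟩
  · simpa [countAndTail_comp_swap c hi hk] using hc
  · ext ω; simp

lemma Gfilt_le (hB : ∀ i, Measurable (B i)) (hBval : ∀ i ω, B i ω = 0 ∨ B i ω = 1) (j : ℕ) :
    Gfilt B j ≤ ‹MeasurableSpace Ω› := fun t ht => by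
  obtain ⟨W, -, rfl⟩ := exists_swapInvariant_of_measurableSet_Gfilt hBval ht
  exact measurable_pattern hB MeasurableSet.of_discrete

variable {μ : Measure Ω} [IsProbabilityMeasure μ]

lemma setIntegral_condRatio_eq (hB : ∀ i, Measurable (B i))
    (hBval : ∀ i ω, B i ω = 0 ∨ B i ω = 1) (hfair : ∀ i, μ {ω | B i ω = 1} = 2⁻¹)
    (hindep : iIndepFun B μ) (p : Fin n) {t : Set Ω} (ht : MeasurableSet[Gfilt B (p + 1)] t) :
    ∫ ω in t, condRatio p (Splus B (p + 1) ω) ∂μ = ∫ ω in t, Mrat B p ω ∂μ := by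
  obtain ⟨W, hW, rfl⟩ := exists_swapInvariant_of_measurableSet_Gfilt hBval ht
  simp only [Mrat_eq_ratio hBval p.isLt.le, Splus_eq_countOnes]
  rw [setIntegral_comp_pattern μ hB hfair hindep W fun c => condRatio p (countOnes (p + 1) c),
    setIntegral_comp_pattern μ hB hfair hindep W fun c => ratio p (countOnes p c),
    sum_ratio_eq_sum_condRatio hW]

lemma condExp_Mrat_ae_eq (hB : ∀ i, Measurable (B i))
    (hBval : ∀ i ω, B i ω = 0 ∨ B i ω = 1) (hfair : ∀ i, μ {ω | B i ω = 1} = 2⁻¹)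
    (hindep : iIndepFun B μ) (p : Fin n) :
    μ[Mrat B p | Gfilt B (p + 1)] =ᵐ[μ] fun ω => condRatio p (Splus B (p + 1) ω) := by
  have hm := Gfilt_le hB hBval (p + 1)
  have : IsFiniteMeasure (μ.trim hm) := isFiniteMeasure_trim hm
  have hSplus : Measurable[Gfilt B (p + 1)] fun ω => Splus B (p + 1) ω :=
    Measurable.of_comap_le le_sup_left
  have hint : ∀ g : (Fin n → Fin 2) → ℝ, Integrable (fun ω => g (pattern B ω)) μ :=
    integrable_comp_pattern μ hB
  refine (ae_eq_condExp_of_forall_setIntegral_eq hm ?_ (fun _ _ _ => ?_)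
    (fun t ht _ => setIntegral_condRatio_eq hB hBval hfair hindep p ht)
    ((Measurable.of_discrete (f := condRatio p)).comp hSplus).aestronglyMeasurable).symm
  · have hM : Mrat B p = fun ω => ratio p (countOnes p (pattern B ω)) := funext fun ω => by
      rw [Mrat_eq_ratio hBval p.isLt.le, Splus_eq_countOnes]
    exact hM ▸ hint fun c => ratio p (countOnes p c)
  · simpa only [Splus_eq_countOnes] using
      (hint fun c => condRatio p (countOnes (p + 1) c)).integrableOn

end Measurable

end Coins

end Knockoff

open Knockoff

/-- For i.i.d. fair `{0,1}` coins `B_1, ..., B_n`, the ratio process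
`M_j = S₊(j)/(1 + S₋(j))` is a supermartingale running backward in `j` with respect to
the filtration `G_j = σ(S₊(j), B_{j+1}, ..., B_n)`:
for `1 ≤ j ≤ n`, `E[M_{j-1} | G_j] ≤ M_j` a.s. -/
theorem stmt_14 {Ω : Type*} [MeasurableSpace Ω] (μ : Measure Ω) [IsProbabilityMeasure μ]
    (n : ℕ) (B : Fin n → Ω → ℕ) (hBmeas : ∀ i, Measurable (B i))
    (hBval : ∀ i, ∀ ω, B i ω = 0 ∨ B i ω = 1)
    (hBfair : ∀ i, μ {ω | B i ω = 1} = 2⁻¹)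
    (hBindep : iIndepFun B μ)
    (j : ℕ) (hj1 : 1 ≤ j) (hjn : j ≤ n) :
    ∀ᵐ ω ∂μ, (μ[fun ω' => Mrat B (j - 1) ω' | Gfilt B j]) ω ≤ Mrat B j ω := by
  obtain ⟨p, rfl⟩ : ∃ p : Fin n, j = p + 1 := ⟨⟨j - 1, by omega⟩, by simp; omega⟩
  filter_upwards [condExp_Mrat_ae_eq hBmeas hBval hBfair hBindep p] with ω hω
  rw [Nat.add_sub_cancel, hω, Mrat_eq_ratio hBval hjn]
  exact condRatio_le_ratio (Nat.le.intro (Splus_add_Sminus hBval hjn ω))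
end

section
/- Let V ~ Binomial(n, 1/2). Then E[ V / (n + 1 - V) ] = 1 - 2^{-n}; in particular E[ V / (n + 1 - V) ] ≤ 1. -/
/-!
Since `V ≤ n` almost surely, the expectation is the finite sum `2⁻ⁿ ∑ₖ C(n,k) k / (n + 1 - k)`.
The identity `C(n,k) k = C(n,k-1) (n + 1 - k)` turns the `k`-th term into `C(n,k-1)`, so the sum
is `∑_{j<n} C(n,j) = 2ⁿ - 1`.
-/

open MeasureTheory Finset
open scoped ENNReal

theorem integral_comp_eq_finsetSum_of_measure_eq_zero {Ω α : Type*} [MeasurableSpace Ω]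
    [MeasurableSpace α] [MeasurableSingletonClass α] [Countable α]
    {μ : Measure Ω} [IsFiniteMeasure μ] {V : Ω → α} (hV : Measurable V) (g : α → ℝ)
    (s : Finset α) (hs : ∀ a ∉ s, μ {ω | V ω = a} = 0) :
    ∫ ω, g (V ω) ∂μ = ∑ a ∈ s, μ.real {ω | V ω = a} * g a := by
  have hnull : μ.map V (↑s)ᶜ = 0 := by
    rw [Measure.map_apply hV (Set.toFinite _).measurableSet.compl,
      ← Set.biUnion_preimage_singleton, measure_biUnion_null_iff (Set.to_countable _)]
    exact fun a ha => hs a ha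
  rw [← integral_map hV.aemeasurable (measurable_of_countable g).aestronglyMeasurable,
    ← Measure.restrict_eq_self_of_ae_mem (s := (s : Set α)) (mem_ae_iff.mpr hnull),
    setIntegral_finset s .finset]
  refine sum_congr rfl fun a _ => ?_
  rw [map_measureReal_apply hV (measurableSet_singleton a), smul_eq_mul]
  rfl

theorem cast_succ_div_mul_choose_succ {n k : ℕ} (hk : k < n) :
    ((k + 1 : ℕ) : ℝ) / ((n : ℝ) + 1 - (k + 1 : ℕ)) * n.choose (k + 1) = n.choose k := by
  have hden : (n : ℝ) + 1 - (k + 1 : ℕ) = (n - k : ℕ) := by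
    push_cast [hk.le]; ring
  have hpos : (0 : ℝ) < (n - k : ℕ) := by exact_mod_cast Nat.sub_pos_of_lt hk
  rw [hden, div_mul_eq_mul_div, div_eq_iff hpos.ne', mul_comm]
  exact_mod_cast Nat.choose_succ_right_eq n k

theorem sum_range_div_mul_choose (n : ℕ) :
    ∑ k ∈ range (n + 1), (k : ℝ) / ((n : ℝ) + 1 - k) * n.choose k = 2 ^ n - 1 := by
  have hchoose : ∑ k ∈ range n, (n.choose k : ℝ) = 2 ^ n - 1 := by
    have := Nat.sum_range_choose n
    rw [sum_range_succ, Nat.choose_self] at this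
    rw [eq_sub_iff_add_eq]
    exact_mod_cast this
  rw [sum_range_succ', ← hchoose]
  simp only [CharP.cast_eq_zero, zero_div, zero_mul, add_zero]
  exact sum_congr rfl fun k hk => cast_succ_div_mul_choose_succ (mem_range.mp hk)

/-- Terminal value bound for the knockoff supermartingale: if `V ~ Binomial(n, 1/2)`,
then `E[V / (n + 1 - V)] = 1 - 2⁻ⁿ ≤ 1`. -/
theorem stmt_16 {Ω : Type*} [MeasurableSpace Ω] (μ : Measure Ω) [IsProbabilityMeasure μ]
    (n : ℕ) (V : Ω → ℕ) (hV : Measurable V)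
    (hbin : ∀ k : ℕ, μ {ω | V ω = k} = (n.choose k : ℝ≥0∞) * (2 : ℝ≥0∞)⁻¹ ^ n) :
    ∫ ω, (V ω : ℝ) / ((n : ℝ) + 1 - (V ω : ℝ)) ∂μ = 1 - (2 : ℝ)⁻¹ ^ n ∧
    ∫ ω, (V ω : ℝ) / ((n : ℝ) + 1 - (V ω : ℝ)) ∂μ ≤ 1 := by
  have hsupp : ∀ k ∉ range (n + 1), μ {ω | V ω = k} = 0 := fun k hk => by
    rw [hbin, Nat.choose_eq_zero_of_lt (by simpa using hk), Nat.cast_zero, zero_mul]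
  have hreal : ∀ k, μ.real {ω | V ω = k} = n.choose k * (2 : ℝ)⁻¹ ^ n := fun k => by
    simp [measureReal_def, hbin]
  have hval : ∫ ω, (V ω : ℝ) / ((n : ℝ) + 1 - (V ω : ℝ)) ∂μ = 1 - (2 : ℝ)⁻¹ ^ n := by
    rw [integral_comp_eq_finsetSum_of_measure_eq_zero hV (fun k : ℕ => (k : ℝ) / (n + 1 - k))
      _ hsupp]
    calc ∑ k ∈ range (n + 1), μ.real {ω | V ω = k} * ((k : ℝ) / (n + 1 - k))
        = (2 : ℝ)⁻¹ ^ n * ∑ k ∈ range (n + 1), (k : ℝ) / (n + 1 - k) * n.choose k := by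
          rw [mul_sum]
          exact sum_congr rfl fun k _ => by rw [hreal]; ring
      _ = 1 - (2 : ℝ)⁻¹ ^ n := by
          rw [sum_range_div_mul_choose, mul_sub, ← mul_pow, inv_mul_cancel₀ two_ne_zero, one_pow,
            mul_one]
  exact ⟨hval, hval ▸ sub_le_self 1 (by positivity)⟩
end
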